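/- arXiv:1801.06682 — 3 statements merged into one kernel-verified Lean document; each statement's English description precedes it below -/
import Mathlib

section
/- Let f(p) = log₂(1 + a·p) − log₂(1 + b·p) for a > b > 0. Then f is concave on [0, ∞). -/
/-!
With `u c p = c / (1 + c p)`, the derivative of `log (1 + c p)` in `p` is `u c p`, and that of
`u c p` is `-(u c p)²`. Since `u c p ≥ 0` is nondecreasing in `c ≥ 0` for `p ≥ 0`, the second
derivative `(u b p)² - (u a p)²` of the difference is nonpositive when `b ≤ a`. Passing to `logb 2`
only rescales by `(log 2)⁻¹ > 0`.
-/

open Real Set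

lemma hasDerivAt_one_add_mul (c p : ℝ) : HasDerivAt (fun x ↦ 1 + c * x) c p := by
  simpa using ((hasDerivAt_id p).const_mul c).const_add 1

lemma hasDerivAt_log_one_add_mul {c p : ℝ} (h : 0 < 1 + c * p) :
    HasDerivAt (fun x ↦ log (1 + c * x)) (c / (1 + c * p)) p :=
  (hasDerivAt_one_add_mul c p).log h.ne'

lemma hasDerivAt_div_one_add_mul {c p : ℝ} (h : 0 < 1 + c * p) :
    HasDerivAt (fun x ↦ c / (1 + c * x)) (-(c / (1 + c * p)) ^ 2) p := by
  refine ((hasDerivAt_const p c).div (hasDerivAt_one_add_mul c p) h.ne').congr_deriv ?_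
  rw [div_pow]
  ring

lemma div_one_add_mul_le_div_one_add_mul {a b p : ℝ} (hb : 0 ≤ b) (hab : b ≤ a) (hp : 0 ≤ p) :
    b / (1 + b * p) ≤ a / (1 + a * p) := by
  rw [div_le_div_iff₀ (by positivity) (by nlinarith)]
  nlinarith

theorem concaveOn_log_one_add_mul_sub_log_one_add_mul {a b : ℝ} (hb : 0 ≤ b) (hab : b ≤ a) :
    ConcaveOn ℝ (Ici 0) (fun p ↦ log (1 + a * p) - log (1 + b * p)) := by
  have ha : 0 ≤ a := hb.trans hab
  have hpos : ∀ {c p : ℝ}, 0 ≤ c → 0 ≤ p → 0 < 1 + c * p := fun hc hp ↦ by positivity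
  have hderiv : ∀ p ∈ Ici (0 : ℝ), HasDerivAt (fun p ↦ log (1 + a * p) - log (1 + b * p))
      (a / (1 + a * p) - b / (1 + b * p)) p := fun p hp ↦
    (hasDerivAt_log_one_add_mul (hpos ha hp)).sub (hasDerivAt_log_one_add_mul (hpos hb hp))
  refine concaveOn_of_hasDerivWithinAt2_nonpos (convex_Ici 0)
    (f' := fun p ↦ a / (1 + a * p) - b / (1 + b * p))
    (f'' := fun p ↦ -(a / (1 + a * p)) ^ 2 - -(b / (1 + b * p)) ^ 2)
    (fun p hp ↦ (hderiv p hp).continuousAt.continuousWithinAt) ?_ ?_ ?_ <;>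
    intro p hp <;> simp only [interior_Ici] at hp ⊢
  · exact (hderiv p (mem_Ici.2 hp.le)).hasDerivWithinAt
  · exact ((hasDerivAt_div_one_add_mul (hpos ha hp.le)).sub
      (hasDerivAt_div_one_add_mul (hpos hb hp.le))).hasDerivWithinAt
  · have hnonneg : 0 ≤ b / (1 + b * p) := div_nonneg hb (hpos hb hp.le).le
    exact sub_nonpos.2 <| neg_le_neg <|
      pow_le_pow_left₀ hnonneg (div_one_add_mul_le_div_one_add_mul hb hab hp.le) 2

theorem stmt_2 (a b : ℝ) (hb : 0 < b) (hab : b < a) :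
    ConcaveOn ℝ (Set.Ici 0)
      (fun p : ℝ => Real.logb 2 (1 + a * p) - Real.logb 2 (1 + b * p)) := by
  refine ((concaveOn_log_one_add_mul_sub_log_one_add_mul hb.le hab.le).smul
    (inv_nonneg.2 (log_nonneg one_le_two))).congr fun p _ ↦ ?_
  simp only [logb, smul_eq_mul]
  ring
end

section
/- For a > b > 0 and λ > 0 with λ·ln 2 < a − b appropriately, the stationary point of f(p) = [log₂(1 + a·p) − log₂(1 + b·p)] − λ·p over p > 0 is p̂ = √((1/(2b) − 1/(2a))² + (1/(λ ln 2))(1/b − 1/a)) − 1/(2b) − 1/(2a); that is, f'(p̂) = 0. -/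
/-!
Put `d = 1/(2b) - 1/(2a)`, `e = (1/b - 1/a) / (λ ln 2)` and `s = √(d² + e)`. Then
`1 + a p̂ = a (s - d)` and `1 + b p̂ = b (s + d)`, so
`a/(1 + a p̂) - b/(1 + b p̂) = (s - d)⁻¹ - (s + d)⁻¹ = 2d / ((s - d)(s + d)) = 2d / e = λ ln 2`.
-/

lemma sqrt_sq_add_sub_mul_sqrt_sq_add_add (d : ℝ) {e : ℝ} (he : 0 ≤ d ^ 2 + e) :
    (√(d ^ 2 + e) - d) * (√(d ^ 2 + e) + d) = e := by
  linear_combination Real.sq_sqrt he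

lemma inv_sub_sub_inv_add_of_mul_eq {s d e : ℝ} (h : (s - d) * (s + d) = e) (he : e ≠ 0) :
    (s - d)⁻¹ - (s + d)⁻¹ = 2 * d / e := by
  have hsub : s - d ≠ 0 := left_ne_zero_of_mul (h ▸ he)
  have hadd : s + d ≠ 0 := right_ne_zero_of_mul (h ▸ he)
  rw [← h]
  field_simp
  ring

theorem stmt_3_general (a b lam : ℝ) (hb : 0 < b) (hab : b < a) (hlam : 0 < lam)
    (phat : ℝ)
    (hphat : phat =
      Real.sqrt ((1 / (2 * b) - 1 / (2 * a)) ^ 2 +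
        (1 / (lam * Real.log 2)) * (1 / b - 1 / a)) - 1 / (2 * b) - 1 / (2 * a)) :
    a / ((1 + a * phat) * Real.log 2) - b / ((1 + b * phat) * Real.log 2) - lam = 0 := by
  have ha : a ≠ 0 := (hb.trans hab).ne'
  have hL : 0 < Real.log 2 := Real.log_pos one_lt_two
  set d := 1 / (2 * b) - 1 / (2 * a) with hd
  set e := 1 / (lam * Real.log 2) * (1 / b - 1 / a) with he_def
  have he : 0 < e := mul_pos (by positivity) (sub_pos.2 (one_div_lt_one_div_of_lt hb hab))
  have hscale : lam * Real.log 2 * e = 2 * d := by rw [hd, he_def]; field_simp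
  have hprod := sqrt_sq_add_sub_mul_sqrt_sq_add_add d (e := e) (by positivity)
  have hfa : 1 + a * phat = a * (√(d ^ 2 + e) - d) := by rw [hphat, hd]; field_simp; ring
  have hfb : 1 + b * phat = b * (√(d ^ 2 + e) + d) := by rw [hphat, hd]; field_simp; ring
  rw [hfa, hfb, mul_assoc, mul_assoc, div_mul_cancel_left₀ ha, div_mul_cancel_left₀ hb.ne',
    mul_inv, mul_inv, ← sub_mul, inv_sub_sub_inv_add_of_mul_eq hprod he.ne', ← hscale]
  field_simp
  ring

theorem stmt_3 (a b lam : ℝ) (hb : 0 < b) (hab : b < a) (hlam : 0 < lam)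
    (hcond : lam * Real.log 2 < a - b)
    (phat : ℝ)
    (hphat : phat =
      Real.sqrt ((1 / (2 * b) - 1 / (2 * a)) ^ 2 +
        (1 / (lam * Real.log 2)) * (1 / b - 1 / a)) - 1 / (2 * b) - 1 / (2 * a)) :
    a / ((1 + a * phat) * Real.log 2) - b / ((1 + b * phat) * Real.log 2) - lam = 0 :=
  stmt_3_general a b lam hb hab hlam phat hphat
end

section
/- If ζ is exponentially distributed with unit mean and c > 0, then E[log₂(1 + c·ζ)] = e^{1/c}·E₁(1/c)/ln 2, where E₁ is the exponential integral, and this value is strictly less than log₂(1 + c). -/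
/-!
Integrating by parts against `e^{-z}` turns `E[ln (1 + cζ)]` into `E[c / (1 + cζ)]`, and the
shift `t = z + 1/c` turns the latter into `e^{1/c} E₁(1/c)`. For the strict bound, `ln (1 + cz)`
lies below its tangent line at `z = 1 = E[ζ]`, strictly away from `z = 1`, and the tangent line
has expectation `ln (1 + c)`: this is the strict form of Jensen's inequality.
-/

open MeasureTheory Real Set Filter Topology

theorem setIntegral_Ioi_comp_add_right {E : Type*} [NormedAddCommGroup E] [NormedSpace ℝ E]
    (f : ℝ → E) (a b : ℝ) : ∫ x in Ioi b, f (x + a) = ∫ t in Ioi (b + a), f t := by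
  have h := (measurePreserving_add_right volume a).setIntegral_preimage_emb
    (measurableEmbedding_addRight a) f (Ioi (b + a))
  rwa [preimage_add_const_Ioi, add_sub_cancel_right] at h

theorem setIntegral_lt_setIntegral_of_le_of_lt_on {X : Type*} [MeasurableSpace X] {μ : Measure X}
    {f g : X → ℝ} {s t : Set X} (hf : IntegrableOn f s μ) (hg : IntegrableOn g s μ)
    (hs : MeasurableSet s) (hle : ∀ x ∈ s, f x ≤ g x) (hts : t ⊆ s)
    (hlt : ∀ x ∈ t, f x < g x) (ht : μ t ≠ 0) :
    ∫ x in s, f x ∂μ < ∫ x in s, g x ∂μ := by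
  have hnonneg : 0 ≤ᵐ[μ.restrict s] g - f :=
    (ae_restrict_iff' hs).mpr <| .of_forall fun x hx => sub_nonneg.mpr (hle x hx)
  have hpos := (setIntegral_pos_iff_support_of_nonneg_ae hnonneg (hg.sub hf)).mpr <|
    (pos_iff_ne_zero.mpr ht).trans_le <| measure_mono fun x hx =>
      ⟨(sub_pos.mpr (hlt x hx)).ne', hts hx⟩
  rw [integral_sub' hg hf] at hpos
  linarith

theorem log_le_log_add_sub_div {x y : ℝ} (hx : 0 < x) (hy : 0 < y) :
    log y ≤ log x + (y - x) / x := by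
  have h := log_le_sub_one_of_pos (div_pos hy hx)
  rw [log_div hy.ne' hx.ne', div_sub_one hx.ne'] at h
  linarith

theorem log_lt_log_add_sub_div {x y : ℝ} (hx : 0 < x) (hy : 0 < y) (hxy : y ≠ x) :
    log y < log x + (y - x) / x := by
  have h := log_lt_sub_one_of_pos (div_pos hy hx) (by rwa [ne_eq, div_eq_one_iff_eq hx.ne'])
  rw [log_div hy.ne' hx.ne', div_sub_one hx.ne'] at h
  linarith

theorem integrableOn_mul_exp_neg_Ioi : IntegrableOn (fun z : ℝ => z * exp (-z)) (Ioi 0) := by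
  refine (GammaIntegral_convergent two_pos).congr_fun (fun z _ => ?_) measurableSet_Ioi
  norm_num [mul_comm]

theorem integral_mul_exp_neg_Ioi : ∫ z in Ioi (0 : ℝ), z * exp (-z) = 1 := by
  convert (Gamma_eq_integral (s := 2) two_pos).symm.trans Gamma_two using 3 with z
  norm_num [mul_comm]

theorem integrableOn_affine_mul_exp_neg_Ioi (a b : ℝ) :
    IntegrableOn (fun z : ℝ => (a + b * z) * exp (-z)) (Ioi 0) := by
  simp only [add_mul, mul_assoc]
  exact ((integrableOn_exp_neg_Ioi 0).const_mul a).add (integrableOn_mul_exp_neg_Ioi.const_mul b)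

theorem integral_affine_mul_exp_neg_Ioi (a b : ℝ) :
    ∫ z in Ioi (0 : ℝ), (a + b * z) * exp (-z) = a + b := by
  simp_rw [add_mul, mul_assoc]
  rw [integral_add ((integrableOn_exp_neg_Ioi 0).const_mul a)
    (integrableOn_mul_exp_neg_Ioi.const_mul b), integral_const_mul, integral_const_mul,
    integral_exp_neg_Ioi_zero, integral_mul_exp_neg_Ioi, mul_one, mul_one]

section ExponentialMoment

variable {c : ℝ}

theorem one_add_mul_pos (hc : 0 ≤ c) {z : ℝ} (hz : 0 ≤ z) : 0 < 1 + c * z := by positivity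

theorem norm_log_one_add_mul_mul_exp_neg_le (hc : 0 ≤ c) {z : ℝ} (hz : 0 ≤ z) :
    ‖log (1 + c * z) * exp (-z)‖ ≤ c * (z * exp (-z)) := by
  rw [norm_mul, norm_of_nonneg (log_nonneg (by nlinarith)), norm_of_nonneg (exp_pos _).le,
    ← mul_assoc]
  refine mul_le_mul_of_nonneg_right ?_ (exp_pos _).le
  linarith [log_le_sub_one_of_pos (one_add_mul_pos hc hz)]

theorem integrableOn_log_one_add_mul_mul_exp_neg (hc : 0 ≤ c) :
    IntegrableOn (fun z => log (1 + c * z) * exp (-z)) (Ioi 0) := by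
  refine (integrableOn_mul_exp_neg_Ioi.const_mul c).mono' ?_ ?_
  · exact (ContinuousOn.mul (ContinuousOn.log (by fun_prop) fun z hz =>
      (one_add_mul_pos hc (le_of_lt hz)).ne') (by fun_prop)).aestronglyMeasurable measurableSet_Ioi
  · exact (ae_restrict_iff' measurableSet_Ioi).mpr <| .of_forall fun z hz =>
      norm_log_one_add_mul_mul_exp_neg_le hc (le_of_lt hz)

theorem integrableOn_div_one_add_mul_mul_exp_neg (hc : 0 ≤ c) :
    IntegrableOn (fun z => c / (1 + c * z) * exp (-z)) (Ioi 0) := by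
  refine ((integrableOn_exp_neg_Ioi 0).const_mul c).mono' ?_ ?_
  · exact (ContinuousOn.mul (ContinuousOn.div continuousOn_const (by fun_prop)
      fun z hz => (one_add_mul_pos hc (le_of_lt hz)).ne') (by fun_prop)).aestronglyMeasurable
      measurableSet_Ioi
  · refine (ae_restrict_iff' measurableSet_Ioi).mpr (.of_forall fun z (hz : 0 < z) => ?_)
    have hdiv : c / (1 + c * z) ≤ c := div_le_self hc (by nlinarith)
    rw [norm_mul, norm_of_nonneg (by positivity), norm_of_nonneg (exp_pos _).le]
    exact mul_le_mul_of_nonneg_right hdiv (exp_pos _).le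

theorem integral_log_one_add_mul_mul_exp_neg (hc : 0 ≤ c) :
    ∫ z in Ioi 0, log (1 + c * z) * exp (-z) = ∫ z in Ioi 0, c / (1 + c * z) * exp (-z) := by
  have hu : ∀ z ∈ Ioi (0 : ℝ), HasDerivAt (fun z => log (1 + c * z)) (c / (1 + c * z)) z :=
    fun z hz => by
      simpa using (((hasDerivAt_id z).const_mul c).const_add 1).log
        (one_add_mul_pos hc (le_of_lt hz)).ne'
  have hv : ∀ z ∈ Ioi (0 : ℝ), HasDerivAt (fun z => -exp (-z)) (exp (-z)) z :=
    fun z _ => (hasDerivAt_neg z).exp.neg.congr_deriv (by simp)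
  have h_zero : Tendsto (fun z => log (1 + c * z) * -exp (-z)) (𝓝[>] 0) (𝓝 0) := by
    have : ContinuousAt (fun z => log (1 + c * z) * -exp (-z)) 0 := by
      fun_prop (disch := norm_num)
    simpa using this.tendsto.mono_left nhdsWithin_le_nhds
  have h_infty : Tendsto (fun z => log (1 + c * z) * -exp (-z)) atTop (𝓝 0) := by
    refine squeeze_zero_norm' ?_ <| by
      simpa using (tendsto_pow_mul_exp_neg_atTop_nhds_zero 1).const_mul c
    filter_upwards [eventually_ge_atTop 0] with z hz
    simpa using norm_log_one_add_mul_mul_exp_neg_le hc hz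
  simpa [integral_neg] using integral_Ioi_mul_deriv_eq_deriv_mul hu hv
    (integrableOn_log_one_add_mul_mul_exp_neg hc)
    (by simpa [Pi.mul_def] using (integrableOn_div_one_add_mul_mul_exp_neg hc).neg) h_zero h_infty

theorem integral_div_one_add_mul_mul_exp_neg (hc : 0 < c) :
    ∫ z in Ioi 0, c / (1 + c * z) * exp (-z) =
      exp (1 / c) * ∫ t in Ioi (1 / c), exp (-t) / t := by
  have hshift := setIntegral_Ioi_comp_add_right (fun t => exp (-t) / t) (1 / c) 0
  rw [zero_add] at hshift
  rw [← hshift, ← integral_const_mul]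
  refine setIntegral_congr_fun measurableSet_Ioi fun z (hz : 0 < z) => ?_
  rw [neg_add, exp_add, exp_neg (1 / c)]
  field_simp
  ring

theorem integral_log_one_add_mul_mul_exp_neg_lt (hc : 0 < c) :
    ∫ z in Ioi 0, log (1 + c * z) * exp (-z) < log (1 + c) := by
  set k := c / (1 + c)
  have h1c : 0 < 1 + c := by linarith
  have htangent : ∀ z, log (1 + c) + (1 + c * z - (1 + c)) / (1 + c) = log (1 + c) - k + k * z :=
    fun z => by simp only [k]; field_simp; ring
  calc ∫ z in Ioi 0, log (1 + c * z) * exp (-z)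
      < ∫ z in Ioi 0, (log (1 + c) - k + k * z) * exp (-z) := by
        refine setIntegral_lt_setIntegral_of_le_of_lt_on
          (integrableOn_log_one_add_mul_mul_exp_neg hc.le) (integrableOn_affine_mul_exp_neg_Ioi _ _)
          measurableSet_Ioi (fun z (hz : 0 < z) => ?_) (Ioi_subset_Ioi zero_le_one)
          (fun z (hz : 1 < z) => ?_) (by simp)
        · rw [← htangent]
          gcongr
          exact log_le_log_add_sub_div h1c (one_add_mul_pos hc.le hz.le)
        · rw [← htangent]
          gcongr
          exact log_lt_log_add_sub_div h1c (one_add_mul_pos hc.le (by linarith))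
            (by nlinarith)
    _ = log (1 + c) := by rw [integral_affine_mul_exp_neg_Ioi]; ring

end ExponentialMoment

theorem stmt_16 (c : ℝ) (hc : 0 < c) :
    (∫ z in Set.Ioi (0:ℝ), Real.logb 2 (1 + c * z) * Real.exp (-z)) =
      Real.exp (1 / c) * (∫ t in Set.Ioi (1 / c), Real.exp (-t) / t) / Real.log 2 ∧
    (∫ z in Set.Ioi (0:ℝ), Real.logb 2 (1 + c * z) * Real.exp (-z)) <
      Real.logb 2 (1 + c) := by
  have hlogb : ∫ z in Ioi (0 : ℝ), logb 2 (1 + c * z) * exp (-z)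
      = (∫ z in Ioi (0 : ℝ), log (1 + c * z) * exp (-z)) / log 2 := by
    simp_rw [logb, div_mul_eq_mul_div, integral_div]
  rw [hlogb, logb]
  refine ⟨?_, div_lt_div_of_pos_right (integral_log_one_add_mul_mul_exp_neg_lt hc)
    (log_pos one_lt_two)⟩
  rw [integral_log_one_add_mul_mul_exp_neg hc.le, integral_div_one_add_mul_mul_exp_neg hc]
end
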